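/- arXiv:2404.14031 — 2 statements merged into one kernel-verified Lean document; each statement's English description precedes it below -/
import Mathlib

section
/- Let A be the adjacency matrix of a simple graph with maximum degree d_max and minimum degree d_min, let 1 be the all-ones vector, and let 0 ≤ τ < 1/d_max. Then every component of x* = (τA + I)^{-1} 1 satisfies x*_k ≥ (1 − d_max τ − d_max² τ² + d_min² d_max τ³) / ((d_min² τ² − 1)(d_max² τ² − 1)). -/
open Matrix Finset

set_option maxHeartbeats 1000000 in
theorem stmt_3 {V : Type*} [Fintype V] [DecidableEq V] [Nonempty V]
    (G : SimpleGraph V) [DecidableRel G.Adj]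
    (A : Matrix V V ℝ) (hA : A = G.adjMatrix ℝ)
    (dmin dmax : ℕ)
    (hdmin : dmin = Finset.univ.inf' Finset.univ_nonempty (fun v => G.degree v))
    (hdmax : dmax = Finset.univ.sup (fun v => G.degree v))
    (τ : ℝ) (hτ0 : 0 ≤ τ) (hτ : τ < 1 / dmax)
    (xstar : V → ℝ) (hx : xstar = (τ • A + 1)⁻¹ *ᵥ (fun _ => 1)) (k : V) :
    (1 - dmax * τ - (dmax : ℝ) ^ 2 * τ ^ 2 + (dmin : ℝ) ^ 2 * dmax * τ ^ 3) /
        (((dmin : ℝ) ^ 2 * τ ^ 2 - 1) * ((dmax : ℝ) ^ 2 * τ ^ 2 - 1)) ≤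
      xstar k := by
  -- degree bounds
  have hdeg_le : ∀ v, (G.degree v : ℝ) ≤ dmax := by
    intro v
    exact_mod_cast Nat.cast_le.mpr (hdmax ▸ Finset.le_sup (Finset.mem_univ v))
  have hle_deg : ∀ v, (dmin : ℝ) ≤ G.degree v := by
    intro v
    exact_mod_cast Nat.cast_le.mpr (hdmin ▸ Finset.inf'_le _ (Finset.mem_univ v))
  have hdd : (dmin : ℝ) ≤ dmax := le_trans (hle_deg (Classical.arbitrary V)) (hdeg_le _)
  -- dmax positive
  rcases Nat.eq_zero_or_pos dmax with h0 | hpos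
  · subst h0; simp at hτ; linarith
  have hdpos : (0:ℝ) < dmax := by exact_mod_cast hpos
  -- b < 1
  have hb1 : (dmax : ℝ) * τ < 1 := by
    rw [lt_div_iff₀ hdpos] at hτ; linarith
  have hb0 : 0 ≤ (dmax : ℝ) * τ := by positivity
  have ha0 : 0 ≤ (dmin : ℝ) * τ := by positivity
  have hab : (dmin : ℝ) * τ ≤ (dmax : ℝ) * τ := by
    exact mul_le_mul_of_nonneg_right hdd hτ0
  -- matrix equation componentwise
  set M : Matrix V V ℝ := τ • A + 1 with hM
  have hMvec : ∀ (x : V → ℝ) (v : V),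
      (M *ᵥ x) v = x v + τ * ∑ j ∈ G.neighborFinset v, x j := by
    intro x v
    simp [hM, add_mulVec, smul_mulVec, one_mulVec, hA,
      SimpleGraph.adjMatrix_mulVec_apply]
    ring
  have hdet : M.det ≠ 0 := by
    intro hdet0
    obtain ⟨v, hv0, hv⟩ := (Matrix.exists_mulVec_eq_zero_iff).mpr hdet0
    obtain ⟨c, _, hc⟩ := Finset.exists_max_image Finset.univ (fun j => |v j|)
      Finset.univ_nonempty
    have hvc : 0 < |v c| := by
      obtain ⟨j, hj⟩ := Function.ne_iff.mp hv0
      exact lt_of_lt_of_le (abs_pos.mpr hj) (hc j (Finset.mem_univ j))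
    have heqc := congrFun hv c
    rw [hMvec] at heqc
    have hsum : |∑ j ∈ G.neighborFinset c, v j| ≤ (G.degree c : ℝ) * |v c| := by
      calc |∑ j ∈ G.neighborFinset c, v j| ≤ ∑ j ∈ G.neighborFinset c, |v j| :=
            Finset.abs_sum_le_sum_abs _ _
        _ ≤ (G.neighborFinset c).card • |v c| :=
            Finset.sum_le_card_nsmul _ _ _ (fun j _ => hc j (Finset.mem_univ j))
        _ = (G.degree c : ℝ) * |v c| := by
            rw [nsmul_eq_mul, G.card_neighborFinset_eq_degree]
    have : |v c| ≤ (dmax : ℝ) * τ * |v c| := by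
      have h1 : v c = -(τ * ∑ j ∈ G.neighborFinset c, v j) := by
        have : (0:V → ℝ) c = 0 := rfl
        rw [this] at heqc; linarith
      calc |v c| = τ * |∑ j ∈ G.neighborFinset c, v j| := by
            rw [h1, abs_neg, abs_mul, abs_of_nonneg hτ0]
        _ ≤ τ * ((G.degree c : ℝ) * |v c|) := by
            apply mul_le_mul_of_nonneg_left hsum hτ0
        _ ≤ (dmax : ℝ) * τ * |v c| := by
            have h2 : τ * (G.degree c : ℝ) ≤ τ * (dmax : ℝ) :=
              mul_le_mul_of_nonneg_left (hdeg_le c) hτ0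
            nlinarith [mul_le_mul_of_nonneg_right h2 (abs_nonneg (v c))]
    nlinarith
  have hMx : M *ᵥ xstar = fun _ => (1:ℝ) := by
    rw [hx, Matrix.mulVec_mulVec, Matrix.mul_nonsing_inv _ (isUnit_iff_ne_zero.mpr hdet), Matrix.one_mulVec]
  have heq : ∀ v, xstar v + τ * ∑ j ∈ G.neighborFinset v, xstar j = 1 := by
    intro v
    have := congrFun hMx v
    rwa [hMvec] at this
  -- min and max
  obtain ⟨km, _, hkm⟩ := Finset.exists_min_image Finset.univ xstar Finset.univ_nonempty
  obtain ⟨kM, _, hkM⟩ := Finset.exists_max_image Finset.univ xstar Finset.univ_nonempty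
  set m := xstar km with hm
  set Mx := xstar kM with hMxdef
  have hmle : ∀ v, m ≤ xstar v := fun v => hkm v (Finset.mem_univ v)
  have hleM : ∀ v, xstar v ≤ Mx := fun v => hkM v (Finset.mem_univ v)
  have hsum_ub : ∀ v, ∑ j ∈ G.neighborFinset v, xstar j ≤ (G.degree v : ℝ) * Mx := by
    intro v
    calc ∑ j ∈ G.neighborFinset v, xstar j ≤ (G.neighborFinset v).card • Mx :=
          Finset.sum_le_card_nsmul _ _ _ (fun j _ => hleM j)
      _ = (G.degree v : ℝ) * Mx := by rw [nsmul_eq_mul, G.card_neighborFinset_eq_degree]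
  have hsum_lb : ∀ v, (G.degree v : ℝ) * m ≤ ∑ j ∈ G.neighborFinset v, xstar j := by
    intro v
    calc (G.degree v : ℝ) * m = (G.neighborFinset v).card • m := by
          rw [nsmul_eq_mul, G.card_neighborFinset_eq_degree]
      _ ≤ ∑ j ∈ G.neighborFinset v, xstar j :=
          Finset.card_nsmul_le_sum _ _ _ (fun j _ => hmle j)
  have hMx0 : 0 ≤ Mx := by
    by_contra h
    push_neg at h
    have h1 := heq kM
    have h2 := hsum_ub kM
    have h3 : (G.degree kM : ℝ) * Mx ≤ 0 :=
      mul_nonpos_of_nonneg_of_nonpos (Nat.cast_nonneg _) (le_of_lt h)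
    nlinarith [hτ0]
  have ha : 1 - τ * ((dmax : ℝ) * Mx) ≤ m := by
    have h1 := heq km
    have h2 := hsum_ub km
    have h3 : (G.degree km : ℝ) * Mx ≤ (dmax : ℝ) * Mx :=
      mul_le_mul_of_nonneg_right (hdeg_le km) hMx0
    nlinarith [hτ0]
  have hm0 : 0 ≤ m := by
    by_contra h
    push_neg at h
    have h1 := heq kM
    have h2 := hsum_lb kM
    have h3 : (dmax : ℝ) * m ≤ (G.degree kM : ℝ) * m := by
      nlinarith [mul_nonneg (sub_nonneg.mpr (hdeg_le kM)) (neg_nonneg.mpr (le_of_lt h))]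
    -- Mx ≤ 1 - τ * dmax * m
    have h4 : Mx ≤ 1 - τ * ((dmax : ℝ) * m) := by nlinarith [hτ0]
    have h5 := mul_le_mul_of_nonneg_left h4 (show (0:ℝ) ≤ τ * dmax by positivity)
    have h6 : 1 - (dmax : ℝ) * τ ≤ m * (1 - ((dmax : ℝ) * τ) * ((dmax : ℝ) * τ)) := by
      nlinarith [ha, h5]
    nlinarith [h6, mul_pos (neg_pos.mpr h)
      (show (0:ℝ) < 1 - ((dmax : ℝ) * τ) * ((dmax : ℝ) * τ) by nlinarith [hb0, hb1])]
  have hc : Mx ≤ 1 - τ * ((dmin : ℝ) * m) := by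
    have h1 := heq kM
    have h2 := hsum_lb kM
    have h3 : (dmin : ℝ) * m ≤ (G.degree kM : ℝ) * m :=
      mul_le_mul_of_nonneg_right (hle_deg kM) hm0
    nlinarith [hτ0]
  -- abbreviate a = dmin*τ, b = dmax*τ (as plain expressions)
  have hb1' : (dmax : ℝ) * τ < 1 := hb1
  have hkey : 1 - (dmax : ℝ) * τ ≤ m * (1 - ((dmin : ℝ) * τ) * ((dmax : ℝ) * τ)) := by
    nlinarith [ha, mul_le_mul_of_nonneg_left hc (show (0:ℝ) ≤ (dmax : ℝ) * τ from hb0)]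
  have h1ab : 0 < 1 - ((dmin : ℝ) * τ) * ((dmax : ℝ) * τ) := by nlinarith [hab, hb0, hb1, ha0]
  have hsq1 : ((dmin : ℝ) * τ) ^ 2 ≤ ((dmax : ℝ) * τ) ^ 2 := by nlinarith [hab, ha0]
  have hsq2 : ((dmax : ℝ) * τ) ^ 2 < 1 := by nlinarith [hb0, hb1]
  have hP : 0 < (1 - ((dmin : ℝ) * τ) ^ 2) * (1 - ((dmax : ℝ) * τ) ^ 2) :=
    mul_pos (by linarith) (by linarith)
  have hpoly : (1 - (dmax : ℝ) * τ - ((dmax : ℝ) * τ) ^ 2 + ((dmin : ℝ) * τ) ^ 2 * ((dmax : ℝ) * τ))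
        * (1 - ((dmin : ℝ) * τ) * ((dmax : ℝ) * τ)) ≤
      (1 - (dmax : ℝ) * τ) * ((1 - ((dmin : ℝ) * τ) ^ 2) * (1 - ((dmax : ℝ) * τ) ^ 2)) := by
    nlinarith [mul_nonneg (sub_nonneg.mpr hab) (mul_nonneg (mul_nonneg hb0 hb0)
        (sub_nonneg.mpr (le_trans hab (le_of_lt hb1)))),
      mul_nonneg (sub_nonneg.mpr hab) (mul_nonneg ha0
        (by nlinarith [hab, hb0, hb1, ha0] : (0:ℝ) ≤ 1 - ((dmin : ℝ) * τ) * (((dmax : ℝ) * τ) * ((dmax : ℝ) * τ))))]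
  have hfinal : 1 - (dmax : ℝ) * τ - ((dmax : ℝ) * τ) ^ 2 + ((dmin : ℝ) * τ) ^ 2 * ((dmax : ℝ) * τ) ≤
      xstar k * ((1 - ((dmin : ℝ) * τ) ^ 2) * (1 - ((dmax : ℝ) * τ) ^ 2)) := by
    have h5 := mul_le_mul_of_nonneg_right hkey (le_of_lt hP)
    have h7 := le_trans hpoly h5
    have h8 := le_of_mul_le_mul_right (by nlinarith [h7] :
      (1 - (dmax : ℝ) * τ - ((dmax : ℝ) * τ) ^ 2 + ((dmin : ℝ) * τ) ^ 2 * ((dmax : ℝ) * τ))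
        * (1 - ((dmin : ℝ) * τ) * ((dmax : ℝ) * τ)) ≤
      m * ((1 - ((dmin : ℝ) * τ) ^ 2) * (1 - ((dmax : ℝ) * τ) ^ 2))
        * (1 - ((dmin : ℝ) * τ) * ((dmax : ℝ) * τ))) h1ab
    have h6 := mul_le_mul_of_nonneg_right (hmle k) (le_of_lt hP)
    linarith [h6, h8]
  have hden : 0 < ((dmin : ℝ) ^ 2 * τ ^ 2 - 1) * ((dmax : ℝ) ^ 2 * τ ^ 2 - 1) := by
    nlinarith [hP]
  rw [div_le_iff₀ hden]
  nlinarith [hfinal]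
end

section
/- For any d_max ≥ 1 and any real α with 0 < α ≤ 1, the polynomial P(τ) = d_max³ α² τ³ − d_max² τ² − d_max τ + 1 satisfies P(τ) > 0 for all τ with 0 ≤ τ < ((√5 − 1)/2)·(1/d_max). -/
theorem stmt_4 (dmax α τ : ℝ) (hd : 1 ≤ dmax) (hα0 : 0 < α) (hα1 : α ≤ 1)
    (hτ0 : 0 ≤ τ) (hτ : τ < (Real.sqrt 5 - 1) / 2 * (1 / dmax)) :
    0 < dmax ^ 3 * α ^ 2 * τ ^ 3 - dmax ^ 2 * τ ^ 2 - dmax * τ + 1 := by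
  have hd0 : (0:ℝ) < dmax := lt_of_lt_of_le one_pos hd
  have hs : Real.sqrt 5 ^ 2 = 5 := Real.sq_sqrt (by norm_num)
  have hs2 : (2:ℝ) ≤ Real.sqrt 5 := by nlinarith [Real.sqrt_nonneg 5]
  have hx : dmax * τ < (Real.sqrt 5 - 1) / 2 := by
    have := (mul_lt_mul_iff_right₀ hd0).mpr hτ
    calc dmax * τ < dmax * ((Real.sqrt 5 - 1) / 2 * (1 / dmax)) := this
      _ = (Real.sqrt 5 - 1) / 2 := by field_simp
  have hcube : 0 ≤ dmax ^ 3 * α ^ 2 * τ ^ 3 := by positivity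
  nlinarith [mul_nonneg hd0.le hτ0, sq_nonneg (dmax * τ)]
end
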